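/- Let B be Exponential(1) and ν, λ, ξ > 0. Then E[ log₂(1 + λB/ν) · 1{λB/ν ≥ ξ} ] = log₂(1+ξ) e^{−ξν/λ} − log₂(e) · e^{ν/λ} Ei(−ν(1+ξ)/λ). -/

import Mathlib

/-!
Against the density `e^{-x}` of `B`, the event `λB/ν ≥ ξ` is the half-line `x ≥ a := ξν/λ`, so
the expectation is `∫_a^∞ log₂(1 + cx) e^{-x} dx` with `c = λ/ν`. Since `Ei' x = e^x / x`, the
function `e^{1/c} Ei(-(x + 1/c)) - e^{-x} log(1 + cx)` is an antiderivative of `e^{-x} log(1 + cx)`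
that vanishes at infinity; the integrand is nonnegative, so the improper fundamental theorem of
calculus applies without a separate integrability argument.
-/

open MeasureTheory ProbabilityTheory Real Set

/-- The exponential integral `Ei(x) = −∫_{−x}^∞ e^{−t}/t dt`. -/
noncomputable def Ei (x : ℝ) : ℝ := -∫ t in Set.Ioi (-x), Real.exp (-t) / t

open Filter Topology

lemma integrableOn_exp_neg_div_Ioi {u : ℝ} (hu : 0 < u) :
    IntegrableOn (fun t => exp (-t) / t) (Ioi u) := by
  refine ((exp_neg_integrableOn_Ioi u one_pos).const_mul u⁻¹).mono' ?_ ?_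
  · exact (by fun_prop : Measurable fun t : ℝ => exp (-t) / t).aestronglyMeasurable
  · filter_upwards [ae_restrict_mem measurableSet_Ioi] with t (ht : u < t)
    rw [norm_of_nonneg (div_nonneg (exp_pos _).le (hu.trans ht).le), neg_one_mul, div_eq_inv_mul]
    gcongr

lemma Ei_eq_add_intervalIntegral {x : ℝ} (hx : x < 0) :
    Ei x = Ei (-1) + ∫ t in (1 : ℝ)..-x, exp (-t) / t := by
  rw [← intervalIntegral.integral_Ioi_sub_Ioi' (integrableOn_exp_neg_div_Ioi one_pos)
    (integrableOn_exp_neg_div_Ioi (neg_pos.mpr hx))]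
  simp only [Ei, neg_neg]
  ring

lemma tendsto_Ei_atBot : Tendsto Ei atBot (𝓝 0) := by
  have h := (intervalIntegral_tendsto_integral_Ioi 1 (integrableOn_exp_neg_div_Ioi one_pos)
    tendsto_neg_atBot_atTop).const_add (Ei (-1))
  rw [show Ei (-1) + ∫ t in Ioi 1, exp (-t) / t = 0 by simp [Ei]] at h
  exact h.congr' ((eventually_lt_atBot 0).mono fun x hx => (Ei_eq_add_intervalIntegral hx).symm)

lemma hasDerivAt_Ei {x : ℝ} (hx : x < 0) : HasDerivAt Ei (exp x / x) x := by
  have hx' : 0 < -x := neg_pos.mpr hx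
  have hcont : ContinuousOn (fun t : ℝ => exp (-t) / t) (Ioi 0) :=
    fun t ht => (by fun_prop (disch := exact ne_of_gt ht) :
      ContinuousAt (fun t : ℝ => exp (-t) / t) t).continuousWithinAt
  have hint : IntervalIntegrable (fun t => exp (-t) / t) volume 1 (-x) :=
    (hcont.mono fun t ht => lt_of_lt_of_le (lt_min one_pos hx') ht.1).intervalIntegrable
  have hJ := intervalIntegral.integral_hasDerivAt_right hint
    (hcont.stronglyMeasurableAtFilter isOpen_Ioi _ hx') (hcont.continuousAt (Ioi_mem_nhds hx'))
  refine (((hJ.comp x (hasDerivAt_neg x)).const_add (Ei (-1))).congr_of_eventuallyEq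
    (eventually_of_mem (Iio_mem_nhds hx) fun y hy => Ei_eq_add_intervalIntegral hy)).congr_deriv ?_
  field_simp

lemma tendsto_exp_neg_mul_log_one_add_mul {c : ℝ} (hc : 0 < c) :
    Tendsto (fun x => exp (-x) * log (1 + c * x)) atTop (𝓝 0) := by
  have hup := (tendsto_pow_mul_exp_neg_atTop_nhds_zero 1).const_mul c
  rw [mul_zero] at hup
  refine tendsto_of_tendsto_of_tendsto_of_le_of_le' tendsto_const_nhds hup ?_ ?_
  all_goals filter_upwards [eventually_ge_atTop 0] with x hx
  · exact mul_nonneg (exp_pos _).le (log_nonneg (by nlinarith))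
  · have hlog : log (1 + c * x) ≤ c * x := by
      linarith [log_le_sub_one_of_pos (by nlinarith : 0 < 1 + c * x)]
    calc exp (-x) * log (1 + c * x) ≤ exp (-x) * (c * x) := by gcongr
      _ = c * (x ^ 1 * exp (-x)) := by ring

lemma hasDerivAt_exp_mul_Ei_sub_exp_neg_mul_log {c x : ℝ} (hc : 0 < c) (hx : 0 < 1 + c * x) :
    HasDerivAt (fun y => exp c⁻¹ * Ei (-(y + c⁻¹)) - exp (-y) * log (1 + c * y))
      (exp (-x) * log (1 + c * x)) x := by
  have hxc' : x + c⁻¹ = (1 + c * x) / c := by field_simp; ring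
  have hxc : 0 < x + c⁻¹ := hxc'.symm ▸ by positivity
  have hEi := (hasDerivAt_Ei (neg_neg_of_pos hxc)).comp x ((hasDerivAt_id' x).add_const c⁻¹).neg
  have hlog := (((hasDerivAt_id' x).const_mul c).const_add 1).log hx.ne'
  refine ((hEi.const_mul (exp c⁻¹)).sub ((hasDerivAt_neg x).exp.mul hlog)).congr_deriv ?_
  rw [exp_neg (x + c⁻¹), exp_add, exp_neg x, hxc']
  field_simp
  ring

theorem integral_Ioi_exp_neg_mul_log_one_add_mul {a c : ℝ} (ha : 0 ≤ a) (hc : 0 < c) :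
    ∫ x in Ioi a, exp (-x) * log (1 + c * x) =
      exp (-a) * log (1 + c * a) - exp c⁻¹ * Ei (-(a + c⁻¹)) := by
  have hlim : Tendsto (fun y => exp c⁻¹ * Ei (-(y + c⁻¹)) - exp (-y) * log (1 + c * y))
      atTop (𝓝 0) := by
    have hEi := tendsto_Ei_atBot.comp
      (tendsto_neg_atTop_atBot.comp (tendsto_atTop_add_const_right _ c⁻¹ tendsto_id))
    simpa using (hEi.const_mul (exp c⁻¹)).sub (tendsto_exp_neg_mul_log_one_add_mul hc)
  rw [integral_Ioi_of_hasDerivAt_of_nonneg'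
    (fun x (hx : a ≤ x) => hasDerivAt_exp_mul_Ei_sub_exp_neg_mul_log hc (by nlinarith))
    (fun x (hx : a < x) => mul_nonneg (exp_pos _).le (log_nonneg (by nlinarith))) hlim]
  ring

lemma integral_expMeasure {r : ℝ} (hr : 0 < r) (g : ℝ → ℝ) :
    ∫ x, g x ∂expMeasure r = ∫ x in Ici 0, r * exp (-(r * x)) * g x := by
  rw [expMeasure, gammaMeasure, integral_withDensity_eq_integral_toReal_smul (f := gammaPDF 1 r)
    (measurable_gammaPDFReal 1 r).ennreal_ofReal (ae_of_all _ fun _ => ENNReal.ofReal_lt_top),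
    ← integral_indicator measurableSet_Ici]
  congr 1 with x
  by_cases hx : 0 ≤ x
  · simp [gammaPDF_eq, hx, hr.le, (exp_pos _).le]
  · simp [gammaPDF_eq, hx]

theorem stmt11_general {Ω : Type*} [MeasurableSpace Ω] (P : Measure Ω)
    (B : Ω → ℝ) (hB : Measurable B) (hmap : Measure.map B P = expMeasure 1)
    (ν lam ξ : ℝ) (hν : 0 < ν) (hlam : 0 < lam) (hξ : 0 < ξ) :
    ∫ ω, Set.indicator {x : ℝ | lam * x / ν ≥ ξ}
        (fun x => Real.logb 2 (1 + lam * x / ν)) (B ω) ∂P =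
      Real.logb 2 (1 + ξ) * Real.exp (-(ξ * ν / lam)) -
        Real.logb 2 (Real.exp 1) * Real.exp (ν / lam) * Ei (-(ν * (1 + ξ) / lam)) := by
  have ha : 0 ≤ ξ * ν / lam := by positivity
  have hevent : {x : ℝ | lam * x / ν ≥ ξ} = Ici (ξ * ν / lam) := by
    ext x
    rw [mem_ofPred_eq, mem_Ici, ge_iff_le, div_le_iff₀ hlam, le_div_iff₀ hν]
    constructor <;> intro h <;> linarith
  have hmeas : Measurable ((Ici (ξ * ν / lam)).indicator fun x => logb 2 (1 + lam * x / ν)) :=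
    ((measurable_log.comp (by fun_prop)).div_const _).indicator measurableSet_Ici
  rw [hevent, ← integral_map hB.aemeasurable hmeas.aestronglyMeasurable, hmap,
    integral_expMeasure one_pos]
  simp_rw [one_mul, ← indicator_mul_right _ (fun x => exp (-x))]
  rw [setIntegral_indicator measurableSet_Ici, inter_eq_right.mpr (Ici_subset_Ici.mpr ha),
    integral_Ici_eq_integral_Ioi]
  simp_rw [logb, mul_div_right_comm lam _ ν, ← mul_div_assoc]
  rw [integral_div, integral_Ioi_exp_neg_mul_log_one_add_mul ha (div_pos hlam hν), inv_div,
    show lam / ν * (ξ * ν / lam) = ξ by field_simp,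
    show ξ * ν / lam + ν / lam = ν * (1 + ξ) / lam by ring, log_exp]
  ring

/-- Expected rate with no unknown interference and unknown signal fading
(Corollary 2): for `B ~ Exponential(1)` and `ν, λ, ξ > 0`,
`E[log₂(1 + λB/ν) 1{λB/ν ≥ ξ}] = log₂(1+ξ) e^{−ξν/λ} − log₂(e) e^{ν/λ} Ei(−ν(1+ξ)/λ)`. -/
theorem stmt11 {Ω : Type*} [MeasurableSpace Ω] (P : Measure Ω) [IsProbabilityMeasure P]
    (B : Ω → ℝ) (hB : Measurable B) (hmap : Measure.map B P = expMeasure 1)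
    (ν lam ξ : ℝ) (hν : 0 < ν) (hlam : 0 < lam) (hξ : 0 < ξ) :
    ∫ ω, Set.indicator {x : ℝ | lam * x / ν ≥ ξ}
        (fun x => Real.logb 2 (1 + lam * x / ν)) (B ω) ∂P =
      Real.logb 2 (1 + ξ) * Real.exp (-(ξ * ν / lam)) -
        Real.logb 2 (Real.exp 1) * Real.exp (ν / lam) * Ei (-(ν * (1 + ξ) / lam)) :=
  stmt11_general P B hB hmap ν lam ξ hν hlam hξ
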